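/- arXiv:1207.2263 — 2 statements merged into one kernel-verified Lean document; each statement's English description precedes it below -/
import Mathlib

section
/- Let (Y^1,M^1) and (Y^2,M^2) be solutions of BSDE(ξ^1,f^1+dV^1) and BSDE(ξ^2,f^2+dV^2) on [0,T], respectively, such that Y^1 and Y^2 are of class (D). Assume ξ^1 ≤ ξ^2 a.s., dV^1 ≤ dV^2 (as random measures on [0,T]), and that either (i) f^2 satisfies (H2) and f^1(t,Y^1_t) ≤ f^2(t,Y^1_t) for a.e. t∈[0,T] a.s., or (ii) f^1 satisfies (H2) and f^1(t,Y^2_t) ≤ f^2(t,Y^2_t) for a.e. t∈[0,T] a.s. Then Y^1_t ≤ Y^2_t for all t∈[0,T], P-a.s. -/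
/-!
Fix `t` and let `σ` be the first time after `t` at which `Y¹ - Y²` becomes negative. On `[t, σ)`
we have `Y¹ ≥ Y²`, so (H2) and the comparison of the generators give
`f¹(s, Y¹_s) ≤ f²(s, Y²_s)` there; with `dV¹ ≤ dV²`, subtracting the two equations gives pathwise
`Y¹_t - Y²_t ≤ Y¹_σ - Y²_σ - ((M¹_σ - M²_σ) - (M¹_t - M²_t))`, while `Y¹_σ ≤ Y²_σ` by right
continuity (and `ξ¹ ≤ ξ²` when `σ = T`). Integrating over `A = {Y¹_t > Y²_t} ∈ ℱ_t`, the martingale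
terms vanish by optional sampling, so `∫_A (Y¹_t - Y²_t) ≤ 0` and `A` is null. Since `σ` is only an
optional time and `M¹, M²` only local martingales, optional sampling is applied at dyadic stopping
times approximating `σ` from above, after localization; class (D) justifies both limits. Right
continuity finally turns `Y¹_t ≤ Y²_t` a.s. for each `t` into a.s. for all `t`.
-/

open MeasureTheory Filter Set

noncomputable section

variable {Ω : Type*} {m0 : MeasurableSpace Ω}

/-- A real-valued function of time is càdlàg: right-continuous with left limits. -/
def IsCadlagFun (g : ℝ → ℝ) : Prop :=
  ∀ t : ℝ, ContinuousWithinAt g (Set.Ici t) t ∧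
    ∃ l : ℝ, Tendsto g (nhdsWithin t (Set.Iio t)) (nhds l)

/-- The total variation `|V|_t` of `g` on the interval `[0, t]`. -/
def varOn (g : ℝ → ℝ) (t : ℝ) : ℝ := (eVariationOn g (Set.Icc 0 t)).toReal

/-- `V` is a càdlàg progressively measurable process of finite variation on `[0,T]`
with `V 0 = 0`. -/
structure IsFVProcess (ℱ : Filtration ℝ m0) (T : ℝ) (V : ℝ → Ω → ℝ) : Prop where
  cadlag : ∀ ω, IsCadlagFun fun t => V t ω
  zero : ∀ ω, V 0 ω = 0
  prog : ProgMeasurable ℱ V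
  finiteVar : ∀ ω, eVariationOn (fun t => V t ω) (Set.Icc 0 T) < ⊤

/-- `M` is a local martingale with respect to `ℱ` under `P`. -/
def IsLocalMartingale (P : Measure Ω) (ℱ : Filtration ℝ m0) (M : ℝ → Ω → ℝ) : Prop :=
  ∃ τ : ℕ → Ω → ℝ, (∀ n, IsStoppingTime ℱ (fun ω => ((τ n ω : ℝ) : WithTop ℝ))) ∧
    (∀ ω, Tendsto (fun n => τ n ω) atTop atTop) ∧
    ∀ n, Martingale (fun t ω => M (min t (τ n ω)) ω) ℱ P

/-- The process `Y` is of class (D) on `[0,T]`: the family of its values at all stopping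
times with values in `[0,T]` is uniformly integrable. -/
def ClassDOn (P : Measure Ω) (ℱ : Filtration ℝ m0) (T : ℝ) (Y : ℝ → Ω → ℝ) : Prop :=
  UniformIntegrable
    (fun τ : {τ : Ω → ℝ // IsStoppingTime ℱ (fun ω => ((τ ω : ℝ) : WithTop ℝ)) ∧ ∀ ω, τ ω ∈ Set.Icc 0 T} =>
      fun ω => Y (τ.1 ω) ω) 1 P

/-- The process `Y` is of class (D): the family of its values at all finite nonnegative
stopping times is uniformly integrable. -/
def ClassD (P : Measure Ω) (ℱ : Filtration ℝ m0) (Y : ℝ → Ω → ℝ) : Prop :=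
  UniformIntegrable
    (fun τ : {τ : Ω → ℝ // IsStoppingTime ℱ (fun ω => ((τ ω : ℝ) : WithTop ℝ)) ∧ ∀ ω, 0 ≤ τ ω} =>
      fun ω => Y (τ.1 ω) ω) 1 P

/-- `(Y, M)` is a solution of the BSDE`(ξ, f + dV)` on `[0, T]`:
`Y` is càdlàg adapted, `M` is a càdlàg local martingale, `t ↦ f(t, Y_t) ∈ L¹(0,T)` and
`Y_t = ξ + ∫_t^T f(s,Y_s) ds + ∫_t^T dV_s - ∫_t^T dM_s` for `t ∈ [0,T]`. -/
structure IsBSDESol (P : Measure Ω) (ℱ : Filtration ℝ m0) (T : ℝ)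
    (ξ : Ω → ℝ) (f : ℝ → Ω → ℝ → ℝ) (V : ℝ → Ω → ℝ)
    (Y M : ℝ → Ω → ℝ) : Prop where
  cadlagY : ∀ᵐ ω ∂P, IsCadlagFun fun t => Y t ω
  adaptedY : Adapted ℱ Y
  cadlagM : ∀ᵐ ω ∂P, IsCadlagFun fun t => M t ω
  locMartM : IsLocalMartingale P ℱ M
  int_f : ∀ᵐ ω ∂P, IntegrableOn (fun s => f s ω (Y s ω)) (Set.Ioc 0 T)
  eqn : ∀ᵐ ω ∂P, ∀ t ∈ Set.Icc 0 T,
    Y t ω = ξ ω + (∫ s in Set.Ioc t T, f s ω (Y s ω)) + (V T ω - V t ω) - (M T ω - M t ω)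

/-- Hypothesis (H1): continuity of `f` in `y`. -/
def H1 (f : ℝ → Ω → ℝ → ℝ) : Prop := ∀ t ω, Continuous fun y => f t ω y

/-- Hypothesis (H2): monotonicity (one-sided Lipschitz with constant 0) of `f` in `y`. -/
def H2 (f : ℝ → Ω → ℝ → ℝ) : Prop :=
  ∀ t ω y y', (f t ω y - f t ω y') * (y - y') ≤ 0

/-- Hypothesis (H3): for every `r > 0`, `t ↦ sup_{|y| ≤ r} |f(t,y) - f(t,0)| ∈ L¹(0,T)`. -/
def H3 (T : ℝ) (f : ℝ → Ω → ℝ → ℝ) : Prop :=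
  ∀ ω, ∀ r > (0:ℝ), IntegrableOn
    (fun t => sSup ((fun y => |f t ω y - f t ω 0|) '' Set.Icc (-r) r)) (Set.Ioc 0 T)

/-- Hypothesis (H4) with exponent `p`:
`E|ξ|^p + E(∫_0^T |f(t,0)| dt)^p + E(∫_0^T d|V|_t)^p < ∞`. -/
def H4 (P : Measure Ω) (T p : ℝ) (ξ : Ω → ℝ) (f : ℝ → Ω → ℝ → ℝ)
    (V : ℝ → Ω → ℝ) : Prop :=
  (∫⁻ ω, ENNReal.ofReal (|ξ ω| ^ p) ∂P) < ⊤ ∧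
  (∫⁻ ω, ENNReal.ofReal ((∫ t in Set.Ioc 0 T, |f t ω 0|) ^ p) ∂P) < ⊤ ∧
  (∫⁻ ω, ENNReal.ofReal (varOn (fun t => V t ω) T ^ p) ∂P) < ⊤

/-- `QV` is the quadratic variation process `[M]` of `M`: the dyadic sums of squared
increments converge in probability to `QV t` for every `t ≥ 0`. -/
def IsQuadVariation (P : Measure Ω) (M QV : ℝ → Ω → ℝ) : Prop :=
  ∀ t : ℝ, 0 ≤ t → ∀ ε : ℝ, 0 < ε →
    Tendsto (fun n : ℕ =>
      P {ω | ε ≤ |(∑ i ∈ Finset.range (2 ^ n),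
          (M (((i : ℝ) + 1) * t / 2 ^ n) ω - M ((i : ℝ) * t / 2 ^ n) ω) ^ 2) - QV t ω|})
      atTop (nhds 0)

/-- `sup_{0 ≤ t ≤ T} |Y_t|`. -/
def supAbsOn (Y : ℝ → Ω → ℝ) (T : ℝ) (ω : Ω) : ℝ := ⨆ t : Set.Icc (0:ℝ) T, |Y t.1 ω|

/-- `sup_{t ≥ 0} |Y_t|`. -/
def supAbs (Y : ℝ → Ω → ℝ) (ω : Ω) : ℝ := ⨆ t : {t : ℝ // 0 ≤ t}, |Y t.1 ω|


/-- `(Y, M)` is a solution of the BSDE`(ζ, f + dV)` with random (finite) terminal time `ζ`: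
`Y` is càdlàg adapted with `Y_{t∧ζ} → 0` as `t → ∞`, `M` is a local martingale, and for
every `T > 0`, `t ↦ f(t,Y_t) ∈ L¹(0,T)` and
`Y_t = Y_{T∧ζ} + ∫_{t∧ζ}^{T∧ζ} f(s,Y_s) ds + ∫_{t∧ζ}^{T∧ζ} dV_s - ∫_{t∧ζ}^{T∧ζ} dM_s`
for `t ∈ [0,T]`. -/
structure IsBSDESolRT (P : Measure Ω) (ℱ : Filtration ℝ m0)
    (ζ : Ω → ℝ) (f : ℝ → Ω → ℝ → ℝ) (V : ℝ → Ω → ℝ)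
    (Y M : ℝ → Ω → ℝ) : Prop where
  cadlagY : ∀ᵐ ω ∂P, IsCadlagFun fun t => Y t ω
  adaptedY : Adapted ℱ Y
  cadlagM : ∀ᵐ ω ∂P, IsCadlagFun fun t => M t ω
  tendsto_zero : ∀ᵐ ω ∂P, Tendsto (fun t : ℝ => Y (min t (ζ ω)) ω) atTop (nhds 0)
  locMartM : IsLocalMartingale P ℱ M
  int_f : ∀ T > (0:ℝ), ∀ᵐ ω ∂P, IntegrableOn (fun s => f s ω (Y s ω)) (Set.Ioc 0 T)
  eqn : ∀ T > (0:ℝ), ∀ᵐ ω ∂P, ∀ t ∈ Set.Icc 0 T,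
    Y t ω = Y (min T (ζ ω)) ω
      + (∫ s in Set.Ioc (min t (ζ ω)) (min T (ζ ω)), f s ω (Y s ω))
      + (V (min T (ζ ω)) ω - V (min t (ζ ω)) ω)
      - (M (min T (ζ ω)) ω - M (min t (ζ ω)) ω)

open Topology

section RightContinuous

variable {g : ℝ → ℝ} {s b : ℝ} {C : Set ℝ}

theorem ContinuousWithinAt.mem_of_forall_rat (hg : ContinuousWithinAt g (Ici s) s) (hsb : s < b)
    (hC : IsClosed C) (h : ∀ q : ℚ, s < q → (q : ℝ) < b → g q ∈ C) : g s ∈ C := by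
  have hs : s ∈ closure (Ioo s b ∩ range ((↑) : ℚ → ℝ)) := by
    refine closure_minimal (Rat.denseRange_cast.open_subset_closure_inter isOpen_Ioo)
      isClosed_closure ?_
    rw [closure_Ioo hsb.ne]
    exact left_mem_Icc.2 hsb.le
  refine closure_minimal ?_ hC ((hg.mono fun x hx => hx.1.1.le).mem_closure_image hs)
  rintro _ ⟨_, ⟨hx, q, rfl⟩, rfl⟩
  exact h q hx.1 hx.2

theorem ContinuousWithinAt.Ici_comp_min {a : ℝ}
    (hg : ContinuousWithinAt g (Ici (min s a)) (min s a)) :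
    ContinuousWithinAt (fun u => g (min u a)) (Ici s) s :=
  ContinuousWithinAt.comp (f := fun u => min u a) hg
    (continuous_id.min continuous_const).continuousWithinAt fun _ hu => min_le_min_right a hu

theorem ae_forall_mem_Icc_of_rightContinuous {P : Measure Ω} {Z : ℝ → Ω → ℝ} {a : ℝ}
    (hC : IsClosed C) (hZ : ∀ᵐ ω ∂P, ∀ s, ContinuousWithinAt (Z · ω) (Ici s) s)
    (h : ∀ t ∈ Icc a b, ∀ᵐ ω ∂P, Z t ω ∈ C) :
    ∀ᵐ ω ∂P, ∀ t ∈ Icc a b, Z t ω ∈ C := by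
  have hcount : (Icc a b ∩ insert b (range ((↑) : ℚ → ℝ))).Countable :=
    ((countable_range _).insert b).mono inter_subset_right
  filter_upwards [(ae_ball_iff hcount).2 fun t ht => h t ht.1, hZ] with ω hrat hω t ht
  rcases ht.2.eq_or_lt with rfl | htb
  · exact hrat t ⟨ht, mem_insert _ _⟩
  · exact (hω t).mem_of_forall_rat htb hC fun q htq hqb =>
      hrat q ⟨⟨ht.1.trans htq.le, hqb.le⟩, mem_insert_of_mem _ ⟨q, rfl⟩⟩

end RightContinuous

section FirstNegTime

def negRatTimes (z : ℝ → ℝ) (t T : ℝ) : Set ℝ :=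
  insert T {x | x ∈ Ico t T ∧ x ∈ range ((↑) : ℚ → ℝ) ∧ z x < 0}

/-- Restricting the infimum to rational times makes this an optional time for any adapted process
and any filtration; for right-continuous `z` it is still the first time in `[t, T]` at which
`z < 0` (or `T` if there is none). -/
def firstNegTime (z : ℝ → ℝ) (t T : ℝ) : ℝ := sInf (negRatTimes z t T)

variable {z : ℝ → ℝ} {t T : ℝ}

theorem bddBelow_negRatTimes : BddBelow (negRatTimes z t T) :=
  ⟨min t T, by rintro x (rfl | ⟨hx, -⟩); exacts [min_le_right _ _, (min_le_left _ _).trans hx.1]⟩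

theorem firstNegTime_le_of_mem {x : ℝ} (hx : x ∈ negRatTimes z t T) : firstNegTime z t T ≤ x :=
  csInf_le bddBelow_negRatTimes hx

theorem firstNegTime_mem_Icc (htT : t ≤ T) : firstNegTime z t T ∈ Icc t T :=
  ⟨le_csInf ⟨T, mem_insert _ _⟩ (by rintro x (rfl | ⟨hx, -⟩); exacts [htT, hx.1]),
    firstNegTime_le_of_mem (mem_insert _ _)⟩

theorem firstNegTime_lt_iff {u : ℝ} : firstNegTime z t T < u ↔
    T < u ∨ ∃ q : ℚ, ((q : ℝ) ∈ Ico t T ∧ (q : ℝ) < u) ∧ z q < 0 := by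
  rw [firstNegTime, csInf_lt_iff bddBelow_negRatTimes ⟨T, mem_insert _ _⟩]
  constructor
  · rintro ⟨x, rfl | ⟨hx, ⟨q, rfl⟩, hzx⟩, hxu⟩
    exacts [Or.inl hxu, Or.inr ⟨q, ⟨hx, hxu⟩, hzx⟩]
  · rintro (hTu | ⟨q, ⟨hq, hqu⟩, hzq⟩)
    exacts [⟨T, mem_insert _ _, hTu⟩, ⟨q, mem_insert_of_mem _ ⟨hq, ⟨q, rfl⟩, hzq⟩, hqu⟩]

theorem nonneg_of_lt_firstNegTime (hz : ∀ s, ContinuousWithinAt z (Ici s) s) {s : ℝ}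
    (hts : t ≤ s) (hs : s < firstNegTime z t T) : 0 ≤ z s := by
  refine (hz s).mem_of_forall_rat hs isClosed_Ici fun q hsq hq =>
    mem_Ici.2 <| le_of_not_gt fun hzq => hq.not_ge (firstNegTime_le_of_mem ?_)
  exact mem_insert_of_mem _ ⟨⟨hts.trans hsq.le, hq.trans_le (firstNegTime_le_of_mem
    (mem_insert _ _))⟩, ⟨q, rfl⟩, hzq⟩

theorem apply_firstNegTime_nonpos (hz : ∀ s, ContinuousWithinAt z (Ici s) s) (hzT : z T ≤ 0) :
    z (firstNegTime z t T) ≤ 0 := by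
  have hmem := csInf_mem_closure ⟨T, mem_insert _ _⟩ (bddBelow_negRatTimes (z := z) (t := t))
  refine closure_minimal ?_ isClosed_Iic
    (((hz _).mono fun _ hx => firstNegTime_le_of_mem hx).mem_closure_image hmem)
  rintro _ ⟨x, rfl | ⟨-, -, hzx⟩, rfl⟩
  exacts [hzT, hzx.le]

end FirstNegTime

def dyadicCeil (k : ℕ) (x : ℝ) : ℝ := (⌊x * 2 ^ k⌋ + 1) / 2 ^ k

section Dyadic

variable {k : ℕ} {x u T : ℝ}

theorem lt_dyadicCeil : x < dyadicCeil k x := by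
  rw [dyadicCeil, lt_div_iff₀ (by positivity)]
  exact Int.lt_floor_add_one _

theorem dyadicCeil_le : dyadicCeil k x ≤ x + (2 ^ k)⁻¹ := by
  rw [dyadicCeil, div_le_iff₀ (by positivity), add_mul, inv_mul_cancel₀ (by positivity)]
  gcongr
  exact Int.floor_le _

theorem dyadicCeil_le_iff : dyadicCeil k x ≤ u ↔ x < ⌊u * 2 ^ k⌋ / 2 ^ k := by
  rw [dyadicCeil, div_le_iff₀ (by positivity), lt_div_iff₀ (by positivity), ← Int.cast_one,
    ← Int.cast_add, ← Int.le_floor, Int.add_one_le_iff, Int.floor_lt]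

theorem floor_mul_div_le (k : ℕ) (u : ℝ) : (⌊u * 2 ^ k⌋ : ℝ) / 2 ^ k ≤ u := by
  rw [div_le_iff₀ (by positivity)]
  exact Int.floor_le _

theorem tendsto_min_dyadicCeil (hxT : x ≤ T) :
    Tendsto (fun k => min T (dyadicCeil k x)) atTop (𝓝[≥] x) := by
  have hinv : Tendsto (fun k : ℕ => x + (2 ^ k : ℝ)⁻¹) atTop (𝓝 x) := by
    simpa using (tendsto_const_nhds (x := x)).add
      (tendsto_inv_atTop_zero.comp (tendsto_pow_atTop_atTop_of_one_lt (one_lt_two (α := ℝ))))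
  have hceil : Tendsto (fun k => dyadicCeil k x) atTop (𝓝 x) :=
    tendsto_of_tendsto_of_tendsto_of_le_of_le tendsto_const_nhds hinv
      (fun _ => (lt_dyadicCeil (x := x)).le) fun _ => dyadicCeil_le
  refine tendsto_nhdsWithin_iff.2 ⟨?_, Eventually.of_forall fun k => le_min hxT lt_dyadicCeil.le⟩
  simpa [min_eq_right hxT] using (tendsto_const_nhds (x := T)).min hceil

theorem tendsto_min_dyadicCeil_of_rightContinuous {P : Measure Ω} {X : ℝ → Ω → ℝ} {η : Ω → ℝ}
    (hX : ∀ᵐ ω ∂P, ∀ s, ContinuousWithinAt (X · ω) (Ici s) s) (hηT : ∀ ω, η ω ≤ T) :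
    ∀ᵐ ω ∂P, Tendsto (fun k => X (min T (dyadicCeil k (η ω))) ω) atTop (𝓝 (X (η ω) ω)) := by
  filter_upwards [hX] with ω hω using (hω _).tendsto.comp (tendsto_min_dyadicCeil (hηT ω))

theorem countable_range_min_dyadicCeil (η : Ω → ℝ) (T : ℝ) (k : ℕ) :
    (range fun ω => ((min T (dyadicCeil k (η ω)) : ℝ) : WithTop ℝ)).Countable :=
  (countable_range fun n : ℤ => ((min T ((n + 1) / 2 ^ k) : ℝ) : WithTop ℝ)).mono
    (by rintro _ ⟨ω, rfl⟩; exact ⟨_, rfl⟩)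

end Dyadic

/-- Hitting times of open sets are optional times; without right continuity of the filtration
they need not be stopping times. -/
def IsOptionalTime (ℱ : Filtration ℝ m0) (η : Ω → ℝ) : Prop :=
  ∀ u : ℝ, MeasurableSet[ℱ u] {ω | η ω < u}

namespace IsOptionalTime

variable {ℱ : Filtration ℝ m0} {η η' : Ω → ℝ}

theorem const (ℱ : Filtration ℝ m0) (t : ℝ) : IsOptionalTime ℱ fun _ : Ω => t :=
  fun _ => MeasurableSet.const _

theorem of_isStoppingTime {τ : Ω → ℝ} (hτ : IsStoppingTime ℱ fun ω => ((τ ω : ℝ) : WithTop ℝ)) :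
    IsOptionalTime ℱ τ := fun u => by simpa using hτ.measurableSet_lt u

theorem isStoppingTime_min_dyadicCeil (hη : IsOptionalTime ℱ η) (T : ℝ) (k : ℕ) :
    IsStoppingTime ℱ fun ω => ((min T (dyadicCeil k (η ω)) : ℝ) : WithTop ℝ) := by
  intro u
  have hset : {ω | ((min T (dyadicCeil k (η ω)) : ℝ) : WithTop ℝ) ≤ u} =
      {_ω | T ≤ u} ∪ {ω | η ω < ⌊u * 2 ^ k⌋ / 2 ^ k} := by
    ext ω
    simp [dyadicCeil_le_iff]
  rw [hset]
  exact (MeasurableSet.const _).union (ℱ.mono (floor_mul_div_le k u) _ (hη _))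

theorem min (hη : IsOptionalTime ℱ η) (hη' : IsOptionalTime ℱ η') :
    IsOptionalTime ℱ fun ω => min (η ω) (η' ω) := fun u => by
  simpa only [min_lt_iff, ofPred_or] using (hη u).union (hη' u)

theorem max (hη : IsOptionalTime ℱ η) (hη' : IsOptionalTime ℱ η') :
    IsOptionalTime ℱ fun ω => max (η ω) (η' ω) := fun u => by
  simpa only [max_lt_iff, ofPred_and] using (hη u).inter (hη' u)

end IsOptionalTime

theorem MeasureTheory.Adapted.isOptionalTime_firstNegTime {ℱ : Filtration ℝ m0}
    {Z : ℝ → Ω → ℝ} (hZ : Adapted ℱ Z) (t T : ℝ) :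
    IsOptionalTime ℱ fun ω => firstNegTime (Z · ω) t T := by
  intro u
  simp only [firstNegTime_lt_iff, ofPred_or, ofPred_exists, ofPred_and]
  refine (MeasurableSet.const _).union (MeasurableSet.iUnion fun q => ?_)
  by_cases hqu : (q : ℝ) < u
  · exact ((MeasurableSet.const _).inter (MeasurableSet.const _)).inter
      (ℱ.mono hqu.le _ (hZ q measurableSet_Iio))
  · simp [hqu]

section Integrals

variable {α ι κ : Type*} [MeasurableSpace α] {μ : Measure α}

theorem MeasureTheory.UniformIntegrable.comp {f : ι → α → ℝ} (hf : UniformIntegrable f 1 μ)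
    (e : κ → ι) : UniformIntegrable (f ∘ e) 1 μ :=
  ⟨fun j => hf.1 (e j), fun _ hε => (hf.2.1 hε).imp fun _ ⟨hδ, h⟩ => ⟨hδ, fun j => h (e j)⟩,
    hf.2.2.imp fun _ hC j => hC (e j)⟩

theorem MeasureTheory.UniformIntegrable.tendsto_setIntegral_of_ae_tendsto [IsFiniteMeasure μ]
    {f : ℕ → α → ℝ} {g : α → ℝ} (hf : UniformIntegrable f 1 μ)
    (hfg : ∀ᵐ x ∂μ, Tendsto (fun n => f n x) atTop (𝓝 (g x))) (s : Set α) :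
    Tendsto (fun n => ∫ x in s, f n x ∂μ) atTop (𝓝 (∫ x in s, g x ∂μ)) := by
  have hg := hf.memLp_of_ae_tendsto hfg
  exact tendsto_setIntegral_of_L1' g hg.1
    (Eventually.of_forall fun n => (hf.memLp n).integrable le_rfl)
    (tendsto_Lp_finite_of_tendsto_ae le_rfl ENNReal.one_ne_top hf.1 hg hf.2.1 hfg) s

theorem ae_nonpos_of_setIntegral_pos_le_zero {f : α → ℝ} (hf : Integrable f μ)
    (hmeas : MeasurableSet {x | 0 < f x}) (h : ∫ x in {x | 0 < f x}, f x ∂μ ≤ 0) :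
    ∀ᵐ x ∂μ, f x ≤ 0 := by
  have hnull : μ {x | 0 < f x} = 0 := by
    by_contra hne
    refine h.not_gt ((setIntegral_pos_iff_support_of_nonneg_ae
      (ae_restrict_of_forall_mem hmeas fun _ hx => le_of_lt hx) hf.integrableOn).2 ?_)
    have hset : Function.support f ∩ {x | 0 < f x} = {x | 0 < f x} :=
      inter_eq_right.2 fun _ hx => Function.mem_support.2 (ne_of_gt hx)
    rwa [hset, pos_iff_ne_zero]
  exact (measure_eq_zero_iff_ae_notMem.1 hnull).mono fun _ hx => not_lt.1 hx

end Integrals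

namespace ClassDOn

variable {P : Measure Ω} {ℱ : Filtration ℝ m0} {T : ℝ} {Y : ℝ → Ω → ℝ}

/-- An optional time is the pointwise limit from above of the dyadic stopping times
`min T (dyadicCeil k η)`, and a.e. limits of a uniformly integrable family stay uniformly
integrable. -/
theorem uniformIntegrable_isOptionalTime (hD : ClassDOn P ℱ T Y)
    (hY : ∀ᵐ ω ∂P, ∀ s, ContinuousWithinAt (Y · ω) (Ici s) s) :
    UniformIntegrable (fun η : {η : Ω → ℝ // IsOptionalTime ℱ η ∧ ∀ ω, η ω ∈ Icc 0 T} =>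
      fun ω => Y (η.1 ω) ω) 1 P := by
  refine (hD.uniformIntegrable_of_ae_tendsto atTop).comp
    fun (η : {η : Ω → ℝ // IsOptionalTime ℱ η ∧ ∀ ω, η ω ∈ Icc 0 T}) =>
    ⟨fun ω => Y (η.1 ω) ω, fun k => ⟨fun ω => min T (dyadicCeil k (η.1 ω)),
      η.2.1.isStoppingTime_min_dyadicCeil T k, fun ω =>
        ⟨le_min ((η.2.2 ω).1.trans (η.2.2 ω).2) ((η.2.2 ω).1.trans lt_dyadicCeil.le),
          min_le_left _ _⟩⟩, ?_⟩
  exact tendsto_min_dyadicCeil_of_rightContinuous hY fun ω => (η.2.2 ω).2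

theorem integrable_of_isOptionalTime (hD : ClassDOn P ℱ T Y)
    (hY : ∀ᵐ ω ∂P, ∀ s, ContinuousWithinAt (Y · ω) (Ici s) s) {η : Ω → ℝ}
    (hη : IsOptionalTime ℱ η) (hηI : ∀ ω, η ω ∈ Icc 0 T) :
    Integrable (fun ω => Y (η ω) ω) P :=
  memLp_one_iff_integrable.1 ((hD.uniformIntegrable_isOptionalTime hY).memLp ⟨η, hη, hηI⟩)

theorem tendsto_setIntegral_of_eventually_eq [IsFiniteMeasure P] (hD : ClassDOn P ℱ T Y)
    (hY : ∀ᵐ ω ∂P, ∀ s, ContinuousWithinAt (Y · ω) (Ici s) s) {η : ℕ → Ω → ℝ} {σ : Ω → ℝ}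
    (hη : ∀ n, IsOptionalTime ℱ (η n)) (hηI : ∀ n ω, η n ω ∈ Icc 0 T)
    (hησ : ∀ ω, ∀ᶠ n in atTop, η n ω = σ ω) (A : Set Ω) :
    Tendsto (fun n => ∫ ω in A, Y (η n ω) ω ∂P) atTop (𝓝 (∫ ω in A, Y (σ ω) ω ∂P)) :=
  ((hD.uniformIntegrable_isOptionalTime hY).comp fun n =>
    ⟨η n, hη n, hηI n⟩).tendsto_setIntegral_of_ae_tendsto (Eventually.of_forall fun ω =>
      tendsto_const_nhds.congr' <| (hησ ω).mono fun _ h => by simp [h]) A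

end ClassDOn

namespace MeasureTheory.Martingale

variable {P : Measure Ω} [IsFiniteMeasure P] {ℱ : Filtration ℝ m0} {N : ℝ → Ω → ℝ}
  {η : Ω → ℝ} {t T : ℝ}

theorem min_dyadicCeil_ae_eq_condExp (hN : Martingale N ℱ P) (hη : IsOptionalTime ℱ η) (k : ℕ) :
    (fun ω => N (min T (dyadicCeil k (η ω))) ω) =ᵐ[P]
      P[N T | (hη.isStoppingTime_min_dyadicCeil T k).measurableSpace] :=
  hN.stoppedValue_ae_eq_condExp_of_le_const_of_countable_range _
    (fun _ => WithTop.coe_le_coe.2 (min_le_left _ _)) (countable_range_min_dyadicCeil η T k)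

theorem uniformIntegrable_min_dyadicCeil (hN : Martingale N ℱ P) (hη : IsOptionalTime ℱ η) :
    UniformIntegrable (fun k ω => N (min T (dyadicCeil k (η ω))) ω) 1 P :=
  ((hN.integrable T).uniformIntegrable_condExp fun k =>
    (hη.isStoppingTime_min_dyadicCeil T k).measurableSpace_le).ae_eq fun k =>
      (hN.min_dyadicCeil_ae_eq_condExp hη k).symm

theorem integrable_of_isOptionalTime (hN : Martingale N ℱ P)
    (hNrc : ∀ᵐ ω ∂P, ∀ s, ContinuousWithinAt (N · ω) (Ici s) s) (hη : IsOptionalTime ℱ η)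
    (hηT : ∀ ω, η ω ≤ T) : Integrable (fun ω => N (η ω) ω) P :=
  (hN.uniformIntegrable_min_dyadicCeil hη).integrable_of_ae_tendsto
    (tendsto_min_dyadicCeil_of_rightContinuous hNrc hηT)

theorem setIntegral_eq_of_isOptionalTime (hN : Martingale N ℱ P)
    (hNrc : ∀ᵐ ω ∂P, ∀ s, ContinuousWithinAt (N · ω) (Ici s) s) (hη : IsOptionalTime ℱ η)
    (htT : t ≤ T) (hηI : ∀ ω, η ω ∈ Icc t T) {B : Set Ω} (hB : MeasurableSet[ℱ t] B) :
    ∫ ω in B, N (η ω) ω ∂P = ∫ ω in B, N t ω ∂P := by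
  have hdyadic : ∀ k, ∫ ω in B, N (min T (dyadicCeil k (η ω))) ω ∂P = ∫ ω in B, N t ω ∂P := by
    intro k
    have hτ := hη.isStoppingTime_min_dyadicCeil T k
    have hBτ : MeasurableSet[hτ.measurableSpace] B := hτ.le_measurableSpace_of_const_le
      (fun ω => WithTop.coe_le_coe.2 (le_min htT ((hηI ω).1.trans lt_dyadicCeil.le))) _ hB
    calc ∫ ω in B, N (min T (dyadicCeil k (η ω))) ω ∂P
        = ∫ ω in B, P[N T | hτ.measurableSpace] ω ∂P :=
          integral_congr_ae (ae_restrict_of_ae (hN.min_dyadicCeil_ae_eq_condExp hη k))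
      _ = ∫ ω in B, N T ω ∂P := setIntegral_condExp hτ.measurableSpace_le (hN.integrable T) hBτ
      _ = ∫ ω in B, N t ω ∂P := (hN.setIntegral_eq htT hB).symm
  have hlim := (hN.uniformIntegrable_min_dyadicCeil hη).tendsto_setIntegral_of_ae_tendsto
    (tendsto_min_dyadicCeil_of_rightContinuous hNrc fun ω => (hηI ω).2) B
  exact tendsto_nhds_unique hlim (tendsto_const_nhds.congr fun k => (hdyadic k).symm)

end MeasureTheory.Martingale

section Comparison

variable {P : Measure Ω} {ℱ : Filtration ℝ m0}

theorem setIntegral_le_of_le_sub_martingale [IsFiniteMeasure P] {Z N : ℝ → Ω → ℝ} {ρ : Ω → ℝ}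
    {t T : ℝ} (hN : Martingale N ℱ P) (hNrc : ∀ᵐ ω ∂P, ∀ s, ContinuousWithinAt (N · ω) (Ici s) s)
    (hρ : IsOptionalTime ℱ ρ) (htT : t ≤ T) (hρI : ∀ ω, ρ ω ∈ Icc t T)
    (hZt : Integrable (Z t) P) (hZρ : Integrable (fun ω => Z (ρ ω) ω) P)
    (hle : ∀ᵐ ω ∂P, Z t ω ≤ Z (ρ ω) ω - (N (ρ ω) ω - N t ω)) {A : Set Ω}
    (hA : MeasurableSet[ℱ t] A) :
    ∫ ω in A, Z t ω ∂P ≤ ∫ ω in A, Z (ρ ω) ω ∂P := by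
  have hNρ := hN.integrable_of_isOptionalTime hNrc hρ fun ω => (hρI ω).2
  have hΔ : Integrable (fun ω => N (ρ ω) ω - N t ω) P := hNρ.sub (hN.integrable t)
  calc ∫ ω in A, Z t ω ∂P ≤ ∫ ω in A, (Z (ρ ω) ω - (N (ρ ω) ω - N t ω)) ∂P :=
        setIntegral_mono_ae hZt.integrableOn (hZρ.sub hΔ).integrableOn hle
    _ = ∫ ω in A, Z (ρ ω) ω ∂P := by
        rw [integral_sub hZρ.integrableOn hΔ.integrableOn,
          integral_sub hNρ.integrableOn (hN.integrable t).integrableOn,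
          hN.setIntegral_eq_of_isOptionalTime hNrc hρ htT hρI hA, sub_self, sub_zero]

theorem le_sub_of_le_sub_stopped {z n₁ n₂ : ℝ → ℝ} {t σ a b : ℝ}
    (h : ∀ u, t ≤ u → u ≤ σ → z t ≤ z u - (n₁ u - n₂ u - (n₁ t - n₂ t))) :
    z t ≤ z (max t (min σ (min a b))) -
      (n₁ (min (max t (min σ (min a b))) a) - n₂ (min (max t (min σ (min a b))) b) -
        (n₁ (min t a) - n₂ (min t b))) := by
  rcases le_or_gt (min σ (min a b)) t with hle | hlt
  · simp [max_eq_left hle]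
  · obtain ⟨htσ, hta, htb⟩ : t < σ ∧ t < a ∧ t < b := by simpa [lt_min_iff] using hlt
    rw [max_eq_right hlt.le, min_eq_left (min_le_of_right_le (min_le_left a b)),
      min_eq_left (min_le_of_right_le (min_le_right a b)), min_eq_left hta.le,
      min_eq_left htb.le]
    exact h _ hlt.le (min_le_left _ _)

theorem eventually_max_min_eq {t σ T : ℝ} {a b : ℕ → ℝ} (hσ : σ ∈ Icc t T)
    (ha : Tendsto a atTop atTop) (hb : Tendsto b atTop atTop) :
    ∀ᶠ n in atTop, max t (min σ (min (a n) (b n))) = σ := by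
  filter_upwards [ha.eventually_ge_atTop T, hb.eventually_ge_atTop T] with n han hbn
  rw [min_eq_left (hσ.2.trans (le_min han hbn)), max_eq_right hσ.1]

theorem H2.antitone {f : ℝ → Ω → ℝ → ℝ} (hf : H2 f) (t : ℝ) (ω : Ω) : Antitone (f t ω) := by
  intro y' y hy
  rcases hy.eq_or_lt with rfl | hlt
  · exact le_rfl
  · nlinarith [hf t ω y y']

variable {T : ℝ} {ξ₁ ξ₂ : Ω → ℝ} {f₁ f₂ : ℝ → Ω → ℝ → ℝ} {V₁ V₂ : ℝ → Ω → ℝ}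
  {Y₁ M₁ Y₂ M₂ : ℝ → Ω → ℝ}

theorem ae_generator_le_of_H2
    (hcase : (H2 f₂ ∧ ∀ᵐ ω ∂P, ∀ᵐ t ∂(volume.restrict (Ioc (0:ℝ) T)),
          f₁ t ω (Y₁ t ω) ≤ f₂ t ω (Y₁ t ω)) ∨
      (H2 f₁ ∧ ∀ᵐ ω ∂P, ∀ᵐ t ∂(volume.restrict (Ioc (0:ℝ) T)),
          f₁ t ω (Y₂ t ω) ≤ f₂ t ω (Y₂ t ω))) :
    ∀ᵐ ω ∂P, ∀ᵐ s ∂(volume.restrict (Ioc (0:ℝ) T)),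
      Y₂ s ω ≤ Y₁ s ω → f₁ s ω (Y₁ s ω) ≤ f₂ s ω (Y₂ s ω) := by
  rcases hcase with ⟨hf, hle⟩ | ⟨hf, hle⟩ <;> filter_upwards [hle] with ω hω <;>
    filter_upwards [hω] with s hs hY
  · exact hs.trans (hf.antitone s ω hY)
  · exact (hf.antitone s ω hY).trans hs

namespace IsBSDESol

variable {ξ : Ω → ℝ} {f : ℝ → Ω → ℝ → ℝ} {V Y M : ℝ → Ω → ℝ}

theorem ae_eq_terminal (h : IsBSDESol P ℱ T ξ f V Y M) (hT : 0 ≤ T) : ∀ᵐ ω ∂P, Y T ω = ξ ω := by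
  filter_upwards [h.eqn] with ω hω
  simpa using hω T ⟨hT, le_rfl⟩

theorem ae_eq_between (h : IsBSDESol P ℱ T ξ f V Y M) :
    ∀ᵐ ω ∂P, ∀ t u, 0 ≤ t → t ≤ u → u ≤ T →
      Y t ω = Y u ω + (∫ s in Ioc t u, f s ω (Y s ω)) + (V u ω - V t ω) - (M u ω - M t ω) := by
  filter_upwards [h.eqn, h.int_f] with ω heq hint t u ht htu huT
  have hsplit := setIntegral_union (Ioc_disjoint_Ioc_of_le le_rfl) measurableSet_Ioc
    (hint.mono_set (Ioc_subset_Ioc ht huT)) (hint.mono_set (Ioc_subset_Ioc (ht.trans htu) le_rfl))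
  rw [Ioc_union_Ioc_eq_Ioc htu huT] at hsplit
  linarith [heq t ⟨ht, htu.trans huT⟩, heq u ⟨ht.trans htu, huT⟩]

theorem ae_rightContinuous (h : IsBSDESol P ℱ T ξ f V Y M) :
    ∀ᵐ ω ∂P, ∀ s, ContinuousWithinAt (Y · ω) (Ici s) s :=
  h.cadlagY.mono fun _ hω s => (hω s).1

end IsBSDESol

/-- Before `Y₁ - Y₂` turns negative the generators compare as `f₁(Y₁) ≤ f₂(Y₂)`, so the `ds` and
`dV` terms of the two equations between `t` and `u` can only lower `Y₁ t - Y₂ t`. -/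
theorem sub_le_sub_of_le_firstNegTime (hsol₁ : IsBSDESol P ℱ T ξ₁ f₁ V₁ Y₁ M₁)
    (hsol₂ : IsBSDESol P ℱ T ξ₂ f₂ V₂ Y₂ M₂)
    (hsign : ∀ᵐ ω ∂P, ∀ᵐ s ∂(volume.restrict (Ioc (0:ℝ) T)),
      Y₂ s ω ≤ Y₁ s ω → f₁ s ω (Y₁ s ω) ≤ f₂ s ω (Y₂ s ω))
    (hdV : ∀ᵐ ω ∂P, MonotoneOn (fun t => V₂ t ω - V₁ t ω) (Icc 0 T)) {t : ℝ} (ht : t ∈ Icc 0 T) :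
    ∀ᵐ ω ∂P, ∀ u, t ≤ u → u ≤ firstNegTime (fun s => Y₁ s ω - Y₂ s ω) t T →
      Y₁ t ω - Y₂ t ω ≤ Y₁ u ω - Y₂ u ω - (M₁ u ω - M₂ u ω - (M₁ t ω - M₂ t ω)) := by
  filter_upwards [hsol₁.ae_eq_between, hsol₂.ae_eq_between, hsol₁.int_f, hsol₂.int_f,
    hsol₁.ae_rightContinuous, hsol₂.ae_rightContinuous, hsign, hdV]
    with ω h₁ h₂ hi₁ hi₂ hc₁ hc₂ hs hv u htu huσ
  have huT : u ≤ T := huσ.trans (firstNegTime_mem_Icc ht.2).2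
  have hsub : Ioo t u ⊆ Ioc 0 T := fun s hs => ⟨ht.1.trans_lt hs.1, hs.2.le.trans huT⟩
  have hf : ∫ s in Ioc t u, f₁ s ω (Y₁ s ω) ≤ ∫ s in Ioc t u, f₂ s ω (Y₂ s ω) := by
    rw [integral_Ioc_eq_integral_Ioo, integral_Ioc_eq_integral_Ioo]
    refine setIntegral_mono_ae_restrict (hi₁.mono_set hsub) (hi₂.mono_set hsub) ?_
    filter_upwards [ae_restrict_mem measurableSet_Ioo,
      ae_restrict_of_ae_restrict_of_subset hsub hs] with s hst hs'
    exact hs' (sub_nonneg.1 (nonneg_of_lt_firstNegTime (fun r => (hc₁ r).sub (hc₂ r)) hst.1.le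
      (hst.2.trans_le huσ)))
  have hV := hv ht ⟨ht.1.trans htu, huT⟩ htu
  linarith [h₁ t u ht.1 htu huT, h₂ t u ht.1 htu huT]

/-- The local martingales are stopped at their localizing times `τ₁ n`, `τ₂ n`, and `Y₁ - Y₂` is
sampled at the optional times `max t (min σ (min (τ₁ n) (τ₂ n)))`, which equal `σ` for large `n`. -/
theorem setIntegral_sub_le_at_firstNegTime [IsFiniteMeasure P]
    (hsol₁ : IsBSDESol P ℱ T ξ₁ f₁ V₁ Y₁ M₁) (hsol₂ : IsBSDESol P ℱ T ξ₂ f₂ V₂ Y₂ M₂)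
    (hD₁ : ClassDOn P ℱ T Y₁) (hD₂ : ClassDOn P ℱ T Y₂)
    (hsign : ∀ᵐ ω ∂P, ∀ᵐ s ∂(volume.restrict (Ioc (0:ℝ) T)),
      Y₂ s ω ≤ Y₁ s ω → f₁ s ω (Y₁ s ω) ≤ f₂ s ω (Y₂ s ω))
    (hdV : ∀ᵐ ω ∂P, MonotoneOn (fun t => V₂ t ω - V₁ t ω) (Icc 0 T)) {t : ℝ} (ht : t ∈ Icc 0 T)
    {A : Set Ω} (hA : MeasurableSet[ℱ t] A) :
    ∫ ω in A, (Y₁ t ω - Y₂ t ω) ∂P ≤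
      ∫ ω in A, (Y₁ (firstNegTime (fun s => Y₁ s ω - Y₂ s ω) t T) ω -
        Y₂ (firstNegTime (fun s => Y₁ s ω - Y₂ s ω) t T) ω) ∂P := by
  obtain ⟨τ₁, hτ₁, hτ₁_lim, hM₁⟩ := hsol₁.locMartM
  obtain ⟨τ₂, hτ₂, hτ₂_lim, hM₂⟩ := hsol₂.locMartM
  set σ : Ω → ℝ := fun ω => firstNegTime (fun s => Y₁ s ω - Y₂ s ω) t T
  have hσI : ∀ ω, σ ω ∈ Icc t T := fun ω => firstNegTime_mem_Icc ht.2
  have hσ0 : ∀ ω, σ ω ∈ Icc 0 T := fun ω => ⟨ht.1.trans (hσI ω).1, (hσI ω).2⟩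
  have hσ : IsOptionalTime ℱ σ := Adapted.isOptionalTime_firstNegTime (Z := Y₁ - Y₂)
    (fun s => (hsol₁.adaptedY s).sub (hsol₂.adaptedY s)) t T
  set η : ℕ → Ω → ℝ := fun n ω => max t (min (σ ω) (min (τ₁ n ω) (τ₂ n ω)))
  have hη : ∀ n, IsOptionalTime ℱ (η n) := fun n => (IsOptionalTime.const ℱ t).max
    (hσ.min ((IsOptionalTime.of_isStoppingTime (hτ₁ n)).min (.of_isStoppingTime (hτ₂ n))))
  have hηI : ∀ n ω, η n ω ∈ Icc t T := fun n ω =>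
    ⟨le_max_left _ _, max_le ht.2 ((min_le_left _ _).trans (hσI ω).2)⟩
  have hη0 : ∀ n ω, η n ω ∈ Icc 0 T := fun n ω => ⟨ht.1.trans (hηI n ω).1, (hηI n ω).2⟩
  have hησ : ∀ ω, ∀ᶠ n in atTop, η n ω = σ ω := fun ω =>
    eventually_max_min_eq (hσI ω) (hτ₁_lim ω) (hτ₂_lim ω)
  have hY₁ : ∀ η, IsOptionalTime ℱ η → (∀ ω, η ω ∈ Icc 0 T) → Integrable (fun ω => Y₁ (η ω) ω) P :=
    fun _ => hD₁.integrable_of_isOptionalTime hsol₁.ae_rightContinuous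
  have hY₂ : ∀ η, IsOptionalTime ℱ η → (∀ ω, η ω ∈ Icc 0 T) → Integrable (fun ω => Y₂ (η ω) ω) P :=
    fun _ => hD₂.integrable_of_isOptionalTime hsol₂.ae_rightContinuous
  have hNrc : ∀ n, ∀ᵐ ω ∂P, ∀ s, ContinuousWithinAt
      (fun u => M₁ (min u (τ₁ n ω)) ω - M₂ (min u (τ₂ n ω)) ω) (Ici s) s := fun n => by
    filter_upwards [hsol₁.cadlagM, hsol₂.cadlagM] with ω h₁ h₂ s
    exact (h₁ _).1.Ici_comp_min.sub (h₂ _).1.Ici_comp_min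
  have hpath := sub_le_sub_of_le_firstNegTime hsol₁ hsol₂ hsign hdV ht
  have hlocalized : ∀ n, ∫ ω in A, (Y₁ t ω - Y₂ t ω) ∂P ≤
      ∫ ω in A, (Y₁ (η n ω) ω - Y₂ (η n ω) ω) ∂P := fun n =>
    setIntegral_le_of_le_sub_martingale (Z := Y₁ - Y₂) ((hM₁ n).sub (hM₂ n)) (hNrc n) (hη n) ht.2
      (hηI n) ((hY₁ _ (.const ℱ t) fun _ => ht).sub (hY₂ _ (.const ℱ t) fun _ => ht))
      ((hY₁ _ (hη n) (hη0 n)).sub (hY₂ _ (hη n) (hη0 n)))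
      (hpath.mono fun ω h => le_sub_of_le_sub_stopped (z := fun s => Y₁ s ω - Y₂ s ω)
        (n₁ := (M₁ · ω)) (n₂ := (M₂ · ω)) h) hA
  have hlim := (hD₁.tendsto_setIntegral_of_eventually_eq hsol₁.ae_rightContinuous hη hη0 hησ A).sub
    (hD₂.tendsto_setIntegral_of_eventually_eq hsol₂.ae_rightContinuous hη hη0 hησ A)
  rw [← integral_sub (hY₁ _ hσ hσ0).integrableOn (hY₂ _ hσ hσ0).integrableOn] at hlim
  refine ge_of_tendsto' (hlim.congr fun n => ?_) hlocalized
  exact (integral_sub (hY₁ _ (hη n) (hη0 n)).integrableOn (hY₂ _ (hη n) (hη0 n)).integrableOn).symm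

theorem bsde_comparison_at [IsFiniteMeasure P]
    (hsol₁ : IsBSDESol P ℱ T ξ₁ f₁ V₁ Y₁ M₁) (hsol₂ : IsBSDESol P ℱ T ξ₂ f₂ V₂ Y₂ M₂)
    (hD₁ : ClassDOn P ℱ T Y₁) (hD₂ : ClassDOn P ℱ T Y₂) (hξ : ∀ᵐ ω ∂P, ξ₁ ω ≤ ξ₂ ω)
    (hdV : ∀ᵐ ω ∂P, MonotoneOn (fun t => V₂ t ω - V₁ t ω) (Icc 0 T))
    (hsign : ∀ᵐ ω ∂P, ∀ᵐ s ∂(volume.restrict (Ioc (0:ℝ) T)),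
      Y₂ s ω ≤ Y₁ s ω → f₁ s ω (Y₁ s ω) ≤ f₂ s ω (Y₂ s ω)) {t : ℝ} (ht : t ∈ Icc 0 T) :
    ∀ᵐ ω ∂P, Y₁ t ω ≤ Y₂ t ω := by
  have hσ : ∀ᵐ ω ∂P, Y₁ (firstNegTime (fun s => Y₁ s ω - Y₂ s ω) t T) ω -
      Y₂ (firstNegTime (fun s => Y₁ s ω - Y₂ s ω) t T) ω ≤ 0 := by
    filter_upwards [hsol₁.ae_eq_terminal (ht.1.trans ht.2), hsol₂.ae_eq_terminal (ht.1.trans ht.2),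
      hξ, hsol₁.ae_rightContinuous, hsol₂.ae_rightContinuous] with ω hT₁ hT₂ hξω h₁ h₂
    exact apply_firstNegTime_nonpos (fun s => (h₁ s).sub (h₂ s)) (by simpa [hT₁, hT₂] using hξω)
  have hA : MeasurableSet[ℱ t] {ω | 0 < Y₁ t ω - Y₂ t ω} :=
    ((hsol₁.adaptedY t).sub (hsol₂.adaptedY t)) measurableSet_Ioi
  have hint : Integrable (fun ω => Y₁ t ω - Y₂ t ω) P :=
    (hD₁.integrable_of_isOptionalTime hsol₁.ae_rightContinuous (.const ℱ t) fun _ => ht).sub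
      (hD₂.integrable_of_isOptionalTime hsol₂.ae_rightContinuous (.const ℱ t) fun _ => ht)
  filter_upwards [ae_nonpos_of_setIntegral_pos_le_zero hint (ℱ.le t _ hA)
    ((setIntegral_sub_le_at_firstNegTime hsol₁ hsol₂ hD₁ hD₂ hsign hdV ht hA).trans
      (integral_nonpos_of_ae (ae_restrict_of_ae hσ)))] with ω hω using sub_nonpos.1 hω

end Comparison

theorem bsde_comparison_general
    (P : Measure Ω) [IsProbabilityMeasure P] (ℱ : Filtration ℝ m0) (T : ℝ)
    (ξ₁ ξ₂ : Ω → ℝ) (f₁ f₂ : ℝ → Ω → ℝ → ℝ) (V₁ V₂ : ℝ → Ω → ℝ)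
    (Y₁ M₁ Y₂ M₂ : ℝ → Ω → ℝ)
    (hsol₁ : IsBSDESol P ℱ T ξ₁ f₁ V₁ Y₁ M₁)
    (hsol₂ : IsBSDESol P ℱ T ξ₂ f₂ V₂ Y₂ M₂)
    (hD₁ : ClassDOn P ℱ T Y₁) (hD₂ : ClassDOn P ℱ T Y₂)
    (hξ : ∀ᵐ ω ∂P, ξ₁ ω ≤ ξ₂ ω)
    (hdV : ∀ᵐ ω ∂P, MonotoneOn (fun t => V₂ t ω - V₁ t ω) (Set.Icc 0 T))
    (hcase :
      (H2 f₂ ∧ ∀ᵐ ω ∂P, ∀ᵐ t ∂(volume.restrict (Set.Ioc (0:ℝ) T)),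
          f₁ t ω (Y₁ t ω) ≤ f₂ t ω (Y₁ t ω)) ∨
      (H2 f₁ ∧ ∀ᵐ ω ∂P, ∀ᵐ t ∂(volume.restrict (Set.Ioc (0:ℝ) T)),
          f₁ t ω (Y₂ t ω) ≤ f₂ t ω (Y₂ t ω))) :
    ∀ᵐ ω ∂P, ∀ t ∈ Set.Icc 0 T, Y₁ t ω ≤ Y₂ t ω := by
  have hrc : ∀ᵐ ω ∂P, ∀ s, ContinuousWithinAt (fun t => Y₁ t ω - Y₂ t ω) (Ici s) s := by
    filter_upwards [hsol₁.ae_rightContinuous, hsol₂.ae_rightContinuous] with ω h₁ h₂ s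
    exact (h₁ s).sub (h₂ s)
  have hle : ∀ t ∈ Icc 0 T, ∀ᵐ ω ∂P, Y₁ t ω - Y₂ t ω ∈ Iic 0 := fun t ht =>
    (bsde_comparison_at hsol₁ hsol₂ hD₁ hD₂ hξ hdV (ae_generator_le_of_H2 hcase) ht).mono
      fun _ h => sub_nonpos.2 h
  filter_upwards [ae_forall_mem_Icc_of_rightContinuous isClosed_Iic hrc hle] with ω hω t ht
  exact sub_nonpos.1 (hω t ht)

/-- Comparison principle for solutions of BSDE`(ξ¹, f¹ + dV¹)` and BSDE`(ξ², f² + dV²)`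
on `[0,T]` whose first components are of class (D). -/
theorem bsde_comparison
    (P : Measure Ω) [IsProbabilityMeasure P] (ℱ : Filtration ℝ m0) (T : ℝ) (hT : 0 ≤ T)
    (ξ₁ ξ₂ : Ω → ℝ) (f₁ f₂ : ℝ → Ω → ℝ → ℝ) (V₁ V₂ : ℝ → Ω → ℝ)
    (Y₁ M₁ Y₂ M₂ : ℝ → Ω → ℝ)
    (hV₁ : IsFVProcess ℱ T V₁) (hV₂ : IsFVProcess ℱ T V₂)
    (hsol₁ : IsBSDESol P ℱ T ξ₁ f₁ V₁ Y₁ M₁)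
    (hsol₂ : IsBSDESol P ℱ T ξ₂ f₂ V₂ Y₂ M₂)
    (hD₁ : ClassDOn P ℱ T Y₁) (hD₂ : ClassDOn P ℱ T Y₂)
    (hξ : ∀ᵐ ω ∂P, ξ₁ ω ≤ ξ₂ ω)
    (hdV : ∀ᵐ ω ∂P, MonotoneOn (fun t => V₂ t ω - V₁ t ω) (Set.Icc 0 T))
    (hcase :
      (H2 f₂ ∧ ∀ᵐ ω ∂P, ∀ᵐ t ∂(volume.restrict (Set.Ioc (0:ℝ) T)),
          f₁ t ω (Y₁ t ω) ≤ f₂ t ω (Y₁ t ω)) ∨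
      (H2 f₁ ∧ ∀ᵐ ω ∂P, ∀ᵐ t ∂(volume.restrict (Set.Ioc (0:ℝ) T)),
          f₁ t ω (Y₂ t ω) ≤ f₂ t ω (Y₂ t ω))) :
    ∀ᵐ ω ∂P, ∀ t ∈ Set.Icc 0 T, Y₁ t ω ≤ Y₂ t ω :=
  bsde_comparison_general P ℱ T ξ₁ ξ₂ f₁ f₂ V₁ V₂ Y₁ M₁ Y₂ M₂ hsol₁ hsol₂ hD₁ hD₂ hξ hdV hcase
end
end

section
/- Let (Y,M) be a solution of BSDE(ξ,f+dV) on [0,T] such that Y is of class (D). Assume that ξ is F_τ-measurable for some stopping time τ with values in [0,T], that f(·,y)=0 on the stochastic interval (τ,T] for every y∈ℝ, and that ∫_τ^T d|V|_t = 0 a.s. Then (Y_{t∧τ}, M_{t∧τ}) = (Y_t, M_t) for all t∈[0,T], P-a.s.; in particular Y and M are constant on [τ,T]. -/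
/-!
After `τ` neither `f` nor `V` contributes, so `Y - M` equals `ξ - M_T` on `[τ, T]`. Fix `t` and
`A = {τ ≤ t} ∈ F_t`. Along a localizing sequence `σ_n`, `1_A (Y_{σ_n ∧ T} - Y_{σ_n ∧ t})` is an
increment of the martingale `M^{σ_n}` after `t`, so its conditional expectation given `F_t`
vanishes; by class (D) and Vitali these increments converge in `L¹` to `1_A (Y_T - Y_t)`,
which therefore also has zero conditional expectation. But on `A` this is `ξ - Y_t`, an
`F_t`-measurable variable, so `Y_t = ξ` a.s. on `{τ ≤ t}`. Right-continuity of `Y` upgrades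
this from rational times to all times simultaneously.
-/

open MeasureTheory Filter Set

noncomputable section

variable {Ω : Type*} {m0 : MeasurableSpace Ω}

open scoped Topology

theorem eVariationOn.eq_of_eVariationOn_Icc_eq {α E : Type*} [LinearOrder α] [EMetricSpace E]
    {f : α → E} {a b c : α} (hab : a ≤ b) (hbc : b ≤ c)
    (hvar : eVariationOn f (Icc a c) = eVariationOn f (Icc a b))
    (hfin : eVariationOn f (Icc a b) ≠ ⊤) :
    ∀ s ∈ Icc b c, f s = f c := by
  have hadd := eVariationOn.Icc_add_Icc f (s := univ) hab hbc (mem_univ b)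
  simp only [univ_inter] at hadd
  have hzero : eVariationOn f (Icc b c) = 0 := by
    rw [hvar] at hadd
    exact (ENNReal.add_right_inj hfin).mp (hadd.trans (add_zero _).symm)
  intro s hs
  exact (edist_eq_zero.mp ((eVariationOn.eq_zero_iff f).mp hzero s hs c ⟨hbc, le_rfl⟩))

theorem eq_of_forall_rat_mem_Ioo {β : Type*} [TopologicalSpace β] [T1Space β] {g : ℝ → β}
    {a b : ℝ} {c : β} (hg : ∀ s ∈ Ico a b, ContinuousWithinAt g (Ici s) s) (hb : g b = c)
    (hq : ∀ q : ℚ, (q : ℝ) ∈ Ioo a b → g q = c) :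
    ∀ s ∈ Icc a b, g s = c := by
  intro s hs
  rcases hs.2.eq_or_lt with rfl | hsb
  · exact hb
  set S := Ioo s b ∩ range ((↑) : ℚ → ℝ)
  have hS : s ∈ closure S := by
    have hsub := Rat.denseRange_cast.open_subset_closure_inter (isOpen_Ioo (a := s) (b := b))
    have := closure_mono hsub
    rw [closure_closure, closure_Ioo hsb.ne] at this
    exact this ⟨le_rfl, hsb.le⟩
  have himage : g '' S ⊆ {c} := by
    rintro _ ⟨_, ⟨hx, q, rfl⟩, rfl⟩
    exact hq q ⟨hs.1.trans_lt hx.1, hx.2⟩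
  have := ((hg s ⟨hs.1, hsb⟩).mono fun x hx => mem_Ici.2 hx.1.1.le).mem_closure_image hS
  simpa using closure_mono himage this

theorem MeasureTheory.UnifIntegrable.comp {ι κ α β : Type*} {m : MeasurableSpace α}
    {μ : Measure α} [NormedAddCommGroup β] {f : ι → α → β} {p : ENNReal}
    (hf : UnifIntegrable f p μ) (e : κ → ι) : UnifIntegrable (fun k => f (e k)) p μ :=
  fun _ hε => (hf hε).imp fun _ ⟨hδ, h⟩ => ⟨hδ, fun k => h (e k)⟩

theorem MeasureTheory.condExp_ae_eq_zero_of_tendsto_of_unifIntegrable {α : Type*}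
    {m m0 : MeasurableSpace α} {μ : Measure α} [IsFiniteMeasure μ] {G : ℕ → α → ℝ} {g : α → ℝ}
    (hG : ∀ n, Integrable (G n) μ) (hg : Integrable g μ) (hui : UnifIntegrable G 1 μ)
    (hlim : ∀ᵐ x ∂μ, Tendsto (fun n => G n x) atTop (𝓝 (g x)))
    (hG0 : ∀ n, μ[G n | m] =ᵐ[μ] 0) :
    μ[g | m] =ᵐ[μ] 0 := by
  have hL1 := tendsto_Lp_finite_of_tendsto_ae le_rfl ENNReal.one_ne_top
    (fun n => (hG n).aestronglyMeasurable) (memLp_one_iff_integrable.2 hg) hui hlim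
  have hbound : ∀ n, eLpNorm (μ[g | m]) 1 μ ≤ eLpNorm (G n - g) 1 μ := fun n =>
    calc eLpNorm (μ[g | m]) 1 μ = eLpNorm (μ[g - G n | m]) 1 μ := by
          refine eLpNorm_congr_ae ?_
          filter_upwards [condExp_sub hg (hG n) m, hG0 n] with x hsub hzero
          simp [hsub, hzero]
      _ ≤ eLpNorm (g - G n) 1 μ := eLpNorm_condExp_le_eLpNorm _ le_rfl
      _ = eLpNorm (G n - g) 1 μ := by rw [← eLpNorm_neg, neg_sub]
  have hzero : eLpNorm (μ[g | m]) 1 μ = 0 := le_antisymm (ge_of_tendsto' hL1 hbound) zero_le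
  exact (eLpNorm_eq_zero_iff integrable_condExp.aestronglyMeasurable one_ne_zero).mp hzero

theorem MeasureTheory.Martingale.condExp_indicator_sub_ae_eq_zero {ι α : Type*} [Preorder ι]
    {m0 : MeasurableSpace α} {μ : Measure α} {ℱ : Filtration ι m0} {X : ι → α → ℝ}
    (hX : Martingale X ℱ μ) {i j : ι} (hij : i ≤ j) {A : Set α} (hA : MeasurableSet[ℱ i] A) :
    μ[A.indicator (X j - X i) | ℱ i] =ᵐ[μ] 0 := by
  filter_upwards [condExp_indicator ((hX.integrable j).sub (hX.integrable i)) hA,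
    condExp_sub (hX.integrable j) (hX.integrable i) (ℱ i), hX.condExp_ae_eq hij,
    hX.condExp_ae_eq (le_refl i)] with x hind hsub hj hi
  by_cases hx : x ∈ A <;> simp [hind, hsub, hj, hi, hx]

theorem MeasureTheory.IsStoppingTime.stronglyMeasurable_indicator_le {ι β : Type*}
    [LinearOrder ι] [TopologicalSpace β] [Zero β] {m : MeasurableSpace Ω} {ℱ : Filtration ι m}
    {τ : Ω → WithTop ι} (hτ : IsStoppingTime ℱ τ) {ξ : Ω → β}
    (hξ : StronglyMeasurable[hτ.measurableSpace] ξ) (i : ι) :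
    StronglyMeasurable[ℱ i] ({ω | τ ω ≤ i}.indicator ξ) := by
  refine StronglyMeasurable.stronglyMeasurable_of_measurableSpace_le_on
    (hτ.measurableSet_le' i) (fun s hs => ?_) (hξ.indicator (hτ.measurableSet_le' i))
    fun ω hω => indicator_of_notMem hω ξ
  simpa [inter_right_comm _ s, inter_self] using ((hτ.measurableSet _).1 hs).2 i

theorem stopped_increment_eq_of_sub_eq_on_Icc {y m : ℝ → ℝ} {a c t T : ℝ}
    (h : ∀ s ∈ Icc a T, y s - m s = c) (hat : a ≤ t) (ht : 0 ≤ t) (htT : t ≤ T) (σ : ℝ) :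
    y (min (max σ 0) T) - y (min (max σ 0) t) = m (min T σ) - m (min t σ) := by
  rcases le_or_gt σ t with hσ | hσ
  · have hmax : max σ 0 ≤ t := max_le hσ ht
    rw [min_eq_left (hmax.trans htT), min_eq_left hmax, min_eq_right (hσ.trans htT),
      min_eq_right hσ, sub_self, sub_self]
  · rw [max_eq_left (ht.trans hσ.le), min_eq_right hσ.le, min_eq_left hσ.le, min_comm T σ]
    have h1 := h (min σ T) ⟨hat.trans (le_min hσ.le htT), min_le_right _ _⟩
    have h2 := h t ⟨hat, htT⟩
    linarith

theorem IsBSDESol.sub_eq_terminal_of_stopped {P : Measure Ω} {ℱ : Filtration ℝ m0} {T : ℝ}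
    {ξ : Ω → ℝ} {f : ℝ → Ω → ℝ → ℝ} {V Y M : ℝ → Ω → ℝ} (hsol : IsBSDESol P ℱ T ξ f V Y M)
    (hV : ∀ ω, eVariationOn (fun t => V t ω) (Icc 0 T) < ⊤) {τ : Ω → ℝ}
    (hτT : ∀ ω, τ ω ∈ Icc 0 T) (hfτ : ∀ ω, ∀ t ∈ Ioc (τ ω) T, ∀ y : ℝ, f t ω y = 0)
    (hVτ : ∀ᵐ ω ∂P, eVariationOn (fun t => V t ω) (Icc 0 T)
        = eVariationOn (fun t => V t ω) (Icc 0 (τ ω))) :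
    ∀ᵐ ω ∂P, ∀ s ∈ Icc (τ ω) T, Y s ω - M s ω = ξ ω - M T ω := by
  filter_upwards [hsol.eqn, hVτ] with ω heqn hvar s hs
  have hVs : V s ω = V T ω := eVariationOn.eq_of_eVariationOn_Icc_eq (hτT ω).1 (hτT ω).2 hvar
    (hvar ▸ (hV ω).ne) s hs
  have hf0 : ∫ u in Ioc s T, f u ω (Y u ω) = 0 := by
    rw [setIntegral_congr_fun measurableSet_Ioc
      fun u hu => hfτ ω u ⟨hs.1.trans_lt hu.1, hu.2⟩ (Y u ω)]
    simp
  have := heqn s ⟨(hτT ω).1.trans hs.1, hs.2⟩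
  rw [hf0, hVs] at this
  linarith

theorem ClassDOn.integrable {P : Measure Ω} {ℱ : Filtration ℝ m0} {T t : ℝ} {Y : ℝ → Ω → ℝ}
    (hD : ClassDOn P ℱ T Y) (ht : t ∈ Icc 0 T) : Integrable (Y t) P :=
  memLp_one_iff_integrable.1 (hD.memLp ⟨fun _ => t, isStoppingTime_const ℱ t, fun _ => ht⟩)

theorem condExp_indicator_sub_ae_eq_zero_of_classDOn {P : Measure Ω} [IsFiniteMeasure P]
    {ℱ : Filtration ℝ m0} {T t : ℝ} {ξ : Ω → ℝ} {Y M : ℝ → Ω → ℝ} {τ : Ω → ℝ}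
    (hM : IsLocalMartingale P ℱ M) (hD : ClassDOn P ℱ T Y)
    (hτ : IsStoppingTime ℱ (fun ω => ((τ ω : ℝ) : WithTop ℝ)))
    (hYM : ∀ᵐ ω ∂P, ∀ s ∈ Icc (τ ω) T, Y s ω - M s ω = ξ ω - M T ω) (ht : t ∈ Icc 0 T) :
    P[{ω | τ ω ≤ t}.indicator (fun ω => Y T ω - Y t ω) | ℱ t] =ᵐ[P] 0 := by
  obtain ⟨σ, hσ, hσ_top, hσM⟩ := hM
  set A := {ω | τ ω ≤ t}
  have hA : MeasurableSet[ℱ t] A := by simpa only [WithTop.coe_le_coe] using hτ t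
  have hT : T ∈ Icc 0 T := ⟨ht.1.trans ht.2, le_rfl⟩
  -- `σ n` may be negative, hence the clipping at `0` to get an index of the class (D) family.
  let clip (n : ℕ) (u : ℝ) (hu : u ∈ Icc 0 T) : {ρ : Ω → ℝ //
      IsStoppingTime ℱ (fun ω => ((ρ ω : ℝ) : WithTop ℝ)) ∧ ∀ ω, ρ ω ∈ Icc 0 T} :=
    ⟨fun ω => min (max (σ n ω) 0) u,
      by simpa only [WithTop.coe_min, WithTop.coe_max] using ((hσ n).max_const 0).min_const u,
      fun ω => ⟨le_min (le_max_right _ _) hu.1, (min_le_right _ _).trans hu.2⟩⟩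
  have hY_int := fun ρ => memLp_one_iff_integrable.1 (hD.memLp ρ)
  set G : ℕ → Ω → ℝ := fun n => A.indicator
    (fun ω => Y (min (max (σ n ω) 0) T) ω - Y (min (max (σ n ω) 0) t) ω)
  have hG_int : ∀ n, Integrable (G n) P := fun n =>
    ((hY_int (clip n T hT)).sub (hY_int (clip n t ht))).indicator (ℱ.le t _ hA)
  have hg_int : Integrable (A.indicator fun ω => Y T ω - Y t ω) P :=
    ((hD.integrable hT).sub (hD.integrable ht)).indicator (ℱ.le t _ hA)
  have hG_ui : UnifIntegrable G 1 P :=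
    ((hD.unifIntegrable.comp fun n => clip n T hT).sub
      (hD.unifIntegrable.comp fun n => clip n t ht) le_rfl
      (fun _ => (hY_int _).aestronglyMeasurable)
      (fun _ => (hY_int _).aestronglyMeasurable)).indicator A
  have hG_lim : ∀ ω, Tendsto (fun n => G n ω) atTop
      (𝓝 (A.indicator (fun ω => Y T ω - Y t ω) ω)) := fun ω => by
    refine tendsto_const_nhds.congr' ?_
    filter_upwards [(hσ_top ω).eventually_ge_atTop T] with n hn
    have hTσ : T ≤ max (σ n ω) 0 := le_max_of_le_left hn
    simp only [G, indicator_apply, min_eq_right hTσ, min_eq_right (ht.2.trans hTσ)]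
  have hG_condExp : ∀ n, P[G n | ℱ t] =ᵐ[P] 0 := fun n => by
    refine (condExp_congr_ae ?_).trans ((hσM n).condExp_indicator_sub_ae_eq_zero ht.2 hA)
    filter_upwards [hYM] with ω hω
    by_cases hωA : ω ∈ A
    · simp only [G, indicator_of_mem hωA, Pi.sub_apply]
      exact stopped_increment_eq_of_sub_eq_on_Icc hω hωA ht.1 ht.2 (σ n ω)
    · simp only [G, indicator_of_notMem hωA]
  exact condExp_ae_eq_zero_of_tendsto_of_unifIntegrable hG_int hg_int hG_ui
    (ae_of_all _ hG_lim) hG_condExp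

theorem ae_eq_terminal_of_stoppingTime_le {P : Measure Ω} [IsFiniteMeasure P]
    {ℱ : Filtration ℝ m0} {T t : ℝ} {ξ : Ω → ℝ} {Y M : ℝ → Ω → ℝ} {τ : Ω → ℝ}
    (hM : IsLocalMartingale P ℱ M) (hD : ClassDOn P ℱ T Y) (hY : Adapted ℱ Y)
    (hτ : IsStoppingTime ℱ (fun ω => ((τ ω : ℝ) : WithTop ℝ)))
    (hξ : StronglyMeasurable[hτ.measurableSpace] ξ)
    (hYM : ∀ᵐ ω ∂P, ∀ s ∈ Icc (τ ω) T, Y s ω - M s ω = ξ ω - M T ω) (ht : t ∈ Icc 0 T) :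
    ∀ᵐ ω ∂P, τ ω ≤ t → Y t ω = ξ ω := by
  set A := {ω | τ ω ≤ t}
  set g : Ω → ℝ := A.indicator (fun ω => Y T ω - Y t ω)
  set Z : Ω → ℝ := A.indicator ξ - A.indicator (Y t)
  have hA : MeasurableSet[ℱ t] A := by simpa only [WithTop.coe_le_coe] using hτ t
  have hgZ : g =ᵐ[P] Z := by
    filter_upwards [hYM] with ω hω
    by_cases hωA : ω ∈ A
    · have := hω T ⟨hωA.trans ht.2, le_rfl⟩
      simp only [g, Z, Pi.sub_apply, indicator_of_mem hωA]
      linarith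
    · simp only [g, Z, Pi.sub_apply, indicator_of_notMem hωA, sub_zero]
  have hξA : StronglyMeasurable[ℱ t] (A.indicator ξ) := by
    simpa only [WithTop.coe_le_coe] using hτ.stronglyMeasurable_indicator_le hξ t
  have hZ_meas : StronglyMeasurable[ℱ t] Z := hξA.sub ((hY t).indicator hA).stronglyMeasurable
  have hZ_int : Integrable Z P :=
    (((hD.integrable ⟨ht.1.trans ht.2, le_rfl⟩).sub (hD.integrable ht)).indicator
      (ℱ.le t _ hA)).congr hgZ
  have hZ0 : Z =ᵐ[P] 0 :=
    calc Z = P[Z | ℱ t] := (condExp_of_stronglyMeasurable (ℱ.le t) hZ_meas hZ_int).symm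
      _ =ᵐ[P] P[g | ℱ t] := condExp_congr_ae hgZ.symm
      _ =ᵐ[P] 0 := condExp_indicator_sub_ae_eq_zero_of_classDOn hM hD hτ hYM ht
  filter_upwards [hZ0] with ω hω hωA
  simp only [Z, Pi.sub_apply, Pi.zero_apply, indicator_of_mem (show ω ∈ A from hωA)] at hω
  linarith

theorem bsde_stopped_general
    (P : Measure Ω) [IsProbabilityMeasure P] (ℱ : Filtration ℝ m0) (T : ℝ)
    (ξ : Ω → ℝ) (f : ℝ → Ω → ℝ → ℝ) (V : ℝ → Ω → ℝ)
    (hV : IsFVProcess ℱ T V)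
    (Y M : ℝ → Ω → ℝ)
    (hsol : IsBSDESol P ℱ T ξ f V Y M) (hD : ClassDOn P ℱ T Y)
    (τ : Ω → ℝ) (hτ : IsStoppingTime ℱ (fun ω => ((τ ω : ℝ) : WithTop ℝ))) (hτT : ∀ ω, τ ω ∈ Set.Icc 0 T)
    (hξτ : StronglyMeasurable[hτ.measurableSpace] ξ)
    (hfτ : ∀ ω, ∀ t ∈ Set.Ioc (τ ω) T, ∀ y : ℝ, f t ω y = 0)
    (hVτ : ∀ᵐ ω ∂P, eVariationOn (fun t => V t ω) (Set.Icc 0 T)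
        = eVariationOn (fun t => V t ω) (Set.Icc 0 (τ ω))) :
    ∀ᵐ ω ∂P, ∀ t ∈ Set.Icc 0 T,
      Y (min t (τ ω)) ω = Y t ω ∧ M (min t (τ ω)) ω = M t ω := by
  have hYM := hsol.sub_eq_terminal_of_stopped hV.finiteVar hτT hfτ hVτ
  have hfixed : ∀ q : ℚ, ∀ᵐ ω ∂P, (q : ℝ) ∈ Icc 0 T → τ ω ≤ q → Y q ω = ξ ω := fun q => by
    by_cases hq : (q : ℝ) ∈ Icc 0 T
    · filter_upwards [ae_eq_terminal_of_stoppingTime_le hsol.locMartM hD hsol.adaptedY hτ hξτ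
        hYM hq] with ω hω _ using hω
    · exact ae_of_all _ fun _ h => absurd h hq
  filter_upwards [hYM, hsol.cadlagY, ae_all_iff.2 hfixed] with ω hYMω hcadlag hrat t ht
  have hYξ : ∀ s ∈ Icc (τ ω) T, Y s ω = ξ ω := by
    refine eq_of_forall_rat_mem_Ioo (fun s _ => (hcadlag s).1) ?_
      fun q hq => hrat q ⟨(hτT ω).1.trans hq.1.le, hq.2.le⟩ hq.1.le
    simpa using hYMω T ⟨(hτT ω).2, le_rfl⟩
  rcases le_total t (τ ω) with htτ | hτt
  · simp only [min_eq_left htτ, and_self]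
  · rw [min_eq_right hτt]
    have hYt := hYξ t ⟨hτt, ht.2⟩
    have hYτ := hYξ (τ ω) ⟨le_rfl, (hτT ω).2⟩
    refine ⟨hYτ.trans hYt.symm, ?_⟩
    linarith [hYMω t ⟨hτt, ht.2⟩, hYMω (τ ω) ⟨le_rfl, (hτT ω).2⟩]

/-- Lemma 3.3: if `ξ` is `F_τ`-measurable, `f(·,y)` vanishes on `(τ, T]` and `V` has no
variation on `(τ, T]`, then any class-(D) solution of BSDE`(ξ, f + dV)` on `[0,T]`
satisfies `(Y_{t∧τ}, M_{t∧τ}) = (Y_t, M_t)` for `t ∈ [0,T]`, i.e. `Y` and `M` are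
constant on `[τ, T]`. -/
theorem bsde_stopped
    (P : Measure Ω) [IsProbabilityMeasure P] (ℱ : Filtration ℝ m0) (T : ℝ) (hT : 0 ≤ T)
    (ξ : Ω → ℝ) (f : ℝ → Ω → ℝ → ℝ) (V : ℝ → Ω → ℝ)
    (hV : IsFVProcess ℱ T V)
    (Y M : ℝ → Ω → ℝ)
    (hsol : IsBSDESol P ℱ T ξ f V Y M) (hD : ClassDOn P ℱ T Y)
    (τ : Ω → ℝ) (hτ : IsStoppingTime ℱ (fun ω => ((τ ω : ℝ) : WithTop ℝ))) (hτT : ∀ ω, τ ω ∈ Set.Icc 0 T)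
    (hξτ : StronglyMeasurable[hτ.measurableSpace] ξ)
    (hfτ : ∀ ω, ∀ t ∈ Set.Ioc (τ ω) T, ∀ y : ℝ, f t ω y = 0)
    (hVτ : ∀ᵐ ω ∂P, eVariationOn (fun t => V t ω) (Set.Icc 0 T)
        = eVariationOn (fun t => V t ω) (Set.Icc 0 (τ ω))) :
    ∀ᵐ ω ∂P, ∀ t ∈ Set.Icc 0 T,
      Y (min t (τ ω)) ω = Y t ω ∧ M (min t (τ ω)) ω = M t ω :=
  bsde_stopped_general P ℱ T ξ f V hV Y M hsol hD τ hτ hτT hξτ hfτ hVτ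

end
end
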